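/- Let p ∈ (0,1/2) and define the region A = { (a,b) ∈ ℝ≥0 × ℝ≥0 : ∃ α ∈ [0,1/2], a ≤ h_b(α) and b ≤ 1 − h_b(α + p − 2αp) }. Then every (a,b) ∈ A satisfies a + b ≤ 1, and if b > 0 then a + b < 1. -/

import Mathlib

/-!
Write `α ⋆ p = α + p - 2αp`. Since `α ⋆ p - α = p (1 - 2α)` and `1/2 - α ⋆ p = (1/2 - α)(1 - 2p)`,
for `α < 1/2` we get `α < α ⋆ p < 1/2`, so strict monotonicity of `h_b` on `[0, 1/2]` gives
`a + b ≤ 1 - (h_b(α ⋆ p) - h_b(α)) < 1`. At `α = 1/2` we have `α ⋆ p = 1/2`, which forces `b ≤ 0`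
and `a ≤ h_b(1/2) = 1`.
-/

open Real Set

noncomputable section

/-- The binary entropy function (base-2 logarithm), with the conventions
`hb 0 = hb 1 = 0` (automatic since `logb 2 0 = 0`). -/
def hb (x : ℝ) : ℝ := -(x * Real.logb 2 x) - (1 - x) * Real.logb 2 (1 - x)

lemma hb_eq_binEntropy_div_log_two (x : ℝ) : hb x = binEntropy x / log 2 := by
  simp only [hb, binEntropy, logb, log_inv]
  ring

lemma hb_two_inv : hb 2⁻¹ = 1 := by
  rw [hb_eq_binEntropy_div_log_two, binEntropy_two_inv, div_self (log_pos one_lt_two).ne']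

lemma hb_strictMonoOn : StrictMonoOn hb (Icc 0 2⁻¹) := fun x hx y hy hxy => by
  simp only [hb_eq_binEntropy_div_log_two]
  exact div_lt_div_of_pos_right (binEntropy_strictMonoOn hx hy hxy) (log_pos one_lt_two)

lemma lt_add_sub_two_mul_mul_and_lt_two_inv {α p : ℝ} (hp : p ∈ Ioo (0 : ℝ) 2⁻¹) (hα : α < 2⁻¹) :
    α < α + p - 2 * α * p ∧ α + p - 2 * α * p < 2⁻¹ := by
  obtain ⟨hp0, hp2⟩ := hp
  constructor <;> nlinarith

theorem stmt8_general (p : ℝ) (hp : p ∈ Set.Ioo (0:ℝ) (1/2)) (a b : ℝ)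
    (hmem : ∃ α ∈ Set.Icc (0:ℝ) (1/2), a ≤ hb α ∧ b ≤ 1 - hb (α + p - 2*α*p)) :
    a + b ≤ 1 ∧ (0 < b → a + b < 1) := by
  rw [one_div] at hp hmem
  obtain ⟨α, ⟨hα0, hα2⟩, ha_le, hb_le⟩ := hmem
  rcases hα2.lt_or_eq with hα | rfl
  · obtain ⟨hαβ, hβ⟩ := lt_add_sub_two_mul_mul_and_lt_two_inv hp hα
    have := hb_strictMonoOn ⟨hα0, hα.le⟩ ⟨by linarith, hβ.le⟩ hαβ
    exact ⟨by linarith, fun _ => by linarith⟩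
  · rw [show (2⁻¹ : ℝ) + p - 2 * 2⁻¹ * p = 2⁻¹ by ring, hb_two_inv] at hb_le
    rw [hb_two_inv] at ha_le
    exact ⟨by linarith, fun hb0 => absurd hb0 (by linarith)⟩

/-- For the region `A = {(a,b) ≥ 0 : ∃ α ∈ [0,1/2], a ≤ h_b(α),
b ≤ 1 − h_b(α + p − 2αp)}` with `p ∈ (0,1/2)`: every `(a,b) ∈ A` satisfies
`a + b ≤ 1`, and if `b > 0` then `a + b < 1`. -/
theorem stmt8 (p : ℝ) (hp : p ∈ Set.Ioo (0:ℝ) (1/2)) (a b : ℝ)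
    (ha : 0 ≤ a) (hbnn : 0 ≤ b)
    (hmem : ∃ α ∈ Set.Icc (0:ℝ) (1/2), a ≤ hb α ∧ b ≤ 1 - hb (α + p - 2*α*p)) :
    a + b ≤ 1 ∧ (0 < b → a + b < 1) :=
  stmt8_general p hp a b hmem
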